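/- arXiv:1310.4772 — 3 statements merged into one kernel-verified Lean document; each statement's English description precedes it below -/
import Mathlib

section
/- Let 𝓛_d be a G-invariant discrete Lagrangian density on the triangulated grid, and φ_d a discrete field. Define L_d(𝛗^j,𝛗^{j+1}) := Σ_{a=0}^{A-1} 𝓛_a^j and the discrete momentum maps 𝖩⁺_{L_d}, 𝖩⁻_{L_d} as ⟨𝖩⁺_{L_d}(𝛗^j,𝛗^{j+1}), ζ⟩ = ⟨D₂L_d, ζ_{M^{A+1}}(𝛗^{j+1})⟩ and ⟨𝖩⁻_{L_d}(𝛗^j,𝛗^{j+1}), ζ⟩ = ⟨-D₁L_d, ζ_{M^{A+1}}(𝛗^j)⟩. Then 𝖩⁺_{L_d}(𝛗^j,𝛗^{j+1}) = Σ_{a=0}^{A-1} J²_{𝓛_d}(j¹φ_d(Δ_a^j)) and 𝖩⁻_{L_d}(𝛗^j,𝛗^{j+1}) = -Σ_{a=0}^{A-1} (J¹_{𝓛_d}(j¹φ_d(Δ_a^j)) + J³_{𝓛_d}(j¹φ_d(Δ_a^j))). -/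
noncomputable section

variable {V : Type*} [NormedAddCommGroup V] [NormedSpace ℝ V] {𝔤 : Type*}

/-- Partial differential of `𝓛 : V³ → ℝ` in its first slot. -/
def T1 (L : V × V × V → ℝ) (p : V × V × V) : V →L[ℝ] ℝ :=
  fderiv ℝ (fun x => L (x, p.2.1, p.2.2)) p.1

/-- Partial differential of `𝓛 : V³ → ℝ` in its second slot. -/
def T2 (L : V × V × V → ℝ) (p : V × V × V) : V →L[ℝ] ℝ :=
  fderiv ℝ (fun x => L (p.1, x, p.2.2)) p.2.1

/-- Partial differential of `𝓛 : V³ → ℝ` in its third slot. -/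
def T3 (L : V × V × V → ℝ) (p : V × V × V) : V →L[ℝ] ℝ :=
  fderiv ℝ (fun x => L (p.1, p.2.1, x)) p.2.2

/-- Partial differential of `L : E × F → ℝ` in the first factor. -/
def pD1 {E F : Type*} [NormedAddCommGroup E] [NormedSpace ℝ E]
    [NormedAddCommGroup F] [NormedSpace ℝ F]
    (L : E × F → ℝ) (p : E × F) : E →L[ℝ] ℝ :=
  fderiv ℝ (fun x => L (x, p.2)) p.1

/-- Partial differential of `L : E × F → ℝ` in the second factor. -/
def pD2 {E F : Type*} [NormedAddCommGroup E] [NormedSpace ℝ E]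
    [NormedAddCommGroup F] [NormedSpace ℝ F]
    (L : E × F → ℝ) (p : E × F) : F →L[ℝ] ℝ :=
  fderiv ℝ (fun y => L (p.1, y)) p.2

open ContinuousLinearMap in
lemma T1_eq (L : V × V × V → ℝ) (hL : Differentiable ℝ L) (p : V × V × V) (w : V) :
    T1 L p w = fderiv ℝ L p (w, 0, 0) := by
  have h1 : HasFDerivAt (fun x : V => (x, p.2.1, p.2.2))
      ((ContinuousLinearMap.id ℝ V).prod (((0 : V →L[ℝ] V)).prod 0)) p.1 :=
    HasFDerivAt.prodMk (hasFDerivAt_id p.1) (HasFDerivAt.prodMk (hasFDerivAt_const p.2.1 p.1) (hasFDerivAt_const p.2.2 p.1))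
  have h := ((hL (p.1, p.2.1, p.2.2)).hasFDerivAt).comp p.1 h1
  have heq : (fun x => L (x, p.2)) = (L ∘ fun x : V => (x, p.2.1, p.2.2)) := rfl
  simp only [T1, heq, h.fderiv]
  simp

open ContinuousLinearMap in
lemma T2_eq (L : V × V × V → ℝ) (hL : Differentiable ℝ L) (p : V × V × V) (w : V) :
    T2 L p w = fderiv ℝ L p (0, w, 0) := by
  have h1 : HasFDerivAt (fun x : V => (p.1, x, p.2.2))
      ((0 : V →L[ℝ] V).prod ((ContinuousLinearMap.id ℝ V).prod 0)) p.2.1 :=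
    HasFDerivAt.prodMk (hasFDerivAt_const p.1 p.2.1) (HasFDerivAt.prodMk (hasFDerivAt_id p.2.1) (hasFDerivAt_const p.2.2 p.2.1))
  have h := ((hL (p.1, p.2.1, p.2.2)).hasFDerivAt).comp p.2.1 h1
  have heq : (fun x => L (p.1, x, p.2.2)) = (L ∘ fun x : V => (p.1, x, p.2.2)) := rfl
  simp only [T2, heq, h.fderiv]
  simp

open ContinuousLinearMap in
lemma T3_eq (L : V × V × V → ℝ) (hL : Differentiable ℝ L) (p : V × V × V) (w : V) :
    T3 L p w = fderiv ℝ L p (0, 0, w) := by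
  have h1 : HasFDerivAt (fun x : V => (p.1, p.2.1, x))
      ((0 : V →L[ℝ] V).prod ((0 : V →L[ℝ] V).prod (ContinuousLinearMap.id ℝ V))) p.2.2 :=
    HasFDerivAt.prodMk (hasFDerivAt_const p.1 p.2.2) (HasFDerivAt.prodMk (hasFDerivAt_const p.2.1 p.2.2) (hasFDerivAt_id p.2.2))
  have h := ((hL (p.1, p.2.1, p.2.2)).hasFDerivAt).comp p.2.2 h1
  have heq : (fun x => L (p.1, p.2.1, x)) = (L ∘ fun x : V => (p.1, p.2.1, x)) := rfl
  simp only [T3, heq, h.fderiv]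
  simp

/-- The discrete momentum maps `𝖩⁺_{L_d}` and `𝖩⁻_{L_d}` of the time-evolution
Lagrangian `L_d(𝛗^j,𝛗^{j+1}) = Σ_a 𝓛_a^j` are the sums of the covariant
momentum maps: `𝖩⁺_{L_d} = Σ_a J²_{𝓛_d}(j¹φ_d(Δ_a^j))` and
`𝖩⁻_{L_d} = -Σ_a (J¹_{𝓛_d} + J³_{𝓛_d})(j¹φ_d(Δ_a^j))`. -/
theorem time_evolution_momentum_maps
    (N A : ℕ)
    (Lag : ℕ → ℕ → V × V × V → ℝ) (hLag : ∀ j a, ContDiff ℝ (⊤ : ℕ∞) (Lag j a))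
    (Φ : ℝ → 𝔤 → V → V) (ξM : 𝔤 → V → V)
    (hΦ0 : ∀ (ξ : 𝔤) (q : V), Φ 0 ξ q = q)
    (hgen : ∀ (ξ : 𝔤) (q : V), HasDerivAt (fun t => Φ t ξ q) (ξM ξ q) 0)
    (hinv : ∀ (j a : ℕ) (t : ℝ) (ξ : 𝔤) (p1 p2 p3 : V),
      Lag j a (Φ t ξ p1, Φ t ξ p2, Φ t ξ p3) = Lag j a (p1, p2, p3))
    (φ : ℕ → ℕ → V) :
    let tri : ℕ → ℕ → V × V × V := fun j a => (φ j a, φ (j + 1) a, φ j (a + 1))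
    let Ld : ℕ → ((Fin (A + 1) → V) × (Fin (A + 1) → V)) → ℝ := fun j p =>
      ∑ a : Fin A, Lag j a.1 (p.1 a.castSucc, p.2 a.castSucc, p.1 a.succ)
    let Φv : ℕ → Fin (A + 1) → V := fun j a => φ j a.1
    ∀ (j : ℕ) (ξ : 𝔤),
      ((pD2 (Ld j) (Φv j, Φv (j + 1))) (fun a => ξM ξ (Φv (j + 1) a)) =
        ∑ a : Fin A, (T2 (Lag j (a : Fin A).1) (tri j (a : Fin A).1)) (ξM ξ (φ (j + 1) (a : Fin A).1))) ∧
      ((-(pD1 (Ld j) (Φv j, Φv (j + 1)))) (fun a => ξM ξ (Φv j a)) =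
        -(∑ a : Fin A,
          ((T1 (Lag j (a : Fin A).1) (tri j (a : Fin A).1)) (ξM ξ (φ j (a : Fin A).1)) +
           (T3 (Lag j (a : Fin A).1) (tri j (a : Fin A).1)) (ξM ξ (φ j ((a : Fin A).1 + 1)))))) := by
  intro tri Ld Φv j ξ
  have hdiff : ∀ a : Fin A, Differentiable ℝ (Lag j a.1) :=
    fun a => (hLag j a.1).differentiable (by simp)
  set D : Fin A → (V × V × V →L[ℝ] ℝ) := fun a => fderiv ℝ (Lag j a.1) (tri j a.1) with hD
  constructor
  · -- 𝖩⁺ part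
    have h2 : HasFDerivAt
        (fun y : Fin (A + 1) → V =>
          ∑ a : Fin A, Lag j a.1 (Φv j a.castSucc, y a.castSucc, Φv j a.succ))
        (∑ a : Fin A, (D a).comp
          (((0 : (Fin (A + 1) → V) →L[ℝ] V)).prod
            ((ContinuousLinearMap.proj a.castSucc).prod 0))) (Φv (j + 1)) := by
      apply HasFDerivAt.fun_sum
      intro a _
      have h1 : HasFDerivAt
          (fun y : Fin (A + 1) → V => (Φv j a.castSucc, y a.castSucc, Φv j a.succ))
          (((0 : (Fin (A + 1) → V) →L[ℝ] V)).prod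
            ((ContinuousLinearMap.proj a.castSucc).prod 0)) (Φv (j + 1)) :=
        (hasFDerivAt_const _ _).prodMk
          (((ContinuousLinearMap.proj (R := ℝ) (φ := fun _ : Fin (A+1) => V)
              a.castSucc).hasFDerivAt).prodMk (hasFDerivAt_const _ _))
      exact (((hdiff a) (tri j a.1)).hasFDerivAt).comp (Φv (j + 1)) h1
    have e2 : pD2 (Ld j) (Φv j, Φv (j + 1)) =
        ∑ a : Fin A, (D a).comp
          (((0 : (Fin (A + 1) → V) →L[ℝ] V)).prod
            ((ContinuousLinearMap.proj a.castSucc).prod 0)) := h2.fderiv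
    rw [e2]
    simp only [ContinuousLinearMap.sum_apply, ContinuousLinearMap.comp_apply,
      ContinuousLinearMap.prod_apply, ContinuousLinearMap.proj_apply,
      ContinuousLinearMap.zero_apply]
    refine Finset.sum_congr rfl fun a _ => ?_
    rw [T2_eq _ (hdiff a)]
    rfl
  · -- 𝖩⁻ part
    have h1sum : HasFDerivAt
        (fun x : Fin (A + 1) → V =>
          ∑ a : Fin A, Lag j a.1 (x a.castSucc, Φv (j + 1) a.castSucc, x a.succ))
        (∑ a : Fin A, (D a).comp
          ((ContinuousLinearMap.proj a.castSucc).prod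
            (((0 : (Fin (A + 1) → V) →L[ℝ] V)).prod (ContinuousLinearMap.proj a.succ))))
        (Φv j) := by
      apply HasFDerivAt.fun_sum
      intro a _
      have h1 : HasFDerivAt
          (fun x : Fin (A + 1) → V => (x a.castSucc, Φv (j + 1) a.castSucc, x a.succ))
          ((ContinuousLinearMap.proj a.castSucc).prod
            (((0 : (Fin (A + 1) → V) →L[ℝ] V)).prod (ContinuousLinearMap.proj a.succ)))
          (Φv j) :=
        ((ContinuousLinearMap.proj (R := ℝ) (φ := fun _ : Fin (A+1) => V)
            a.castSucc).hasFDerivAt).prodMk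
          ((hasFDerivAt_const _ _).prodMk
            ((ContinuousLinearMap.proj (R := ℝ) (φ := fun _ : Fin (A+1) => V)
              a.succ).hasFDerivAt))
      exact (((hdiff a) (tri j a.1)).hasFDerivAt).comp (Φv j) h1
    have e1 : pD1 (Ld j) (Φv j, Φv (j + 1)) =
        ∑ a : Fin A, (D a).comp
          ((ContinuousLinearMap.proj a.castSucc).prod
            (((0 : (Fin (A + 1) → V) →L[ℝ] V)).prod (ContinuousLinearMap.proj a.succ))) :=
      h1sum.fderiv
    rw [e1]
    simp only [ContinuousLinearMap.neg_apply, ContinuousLinearMap.sum_apply,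
      ContinuousLinearMap.comp_apply, ContinuousLinearMap.prod_apply,
      ContinuousLinearMap.proj_apply, ContinuousLinearMap.zero_apply, neg_inj]
    refine Finset.sum_congr rfl fun a _ => ?_
    rw [T1_eq _ (hdiff a), T3_eq _ (hdiff a)]
    have : ((fun b => ξM ξ (Φv j b)) a.castSucc, (0 : V), (fun b => ξM ξ (Φv j b)) a.succ)
        = (ξM ξ (φ j a.1), (0:V), (0:V)) + ((0:V), (0:V), ξM ξ (φ j (a.1 + 1))) := by
      simp only [Prod.mk_add_mk, add_zero, zero_add, Prod.mk.injEq]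
      exact ⟨rfl, trivial, rfl⟩
    rw [this, map_add]

end
end

section
/- Suppose 𝓛_d is G-invariant and φ_d satisfies the discrete covariant Euler-Lagrange equations together with the discrete zero-traction boundary conditions D₁𝓛_0^j + D₂𝓛_0^{j-1} = 0 and D₃𝓛_{A-1}^j = 0 for j = 1,...,N-1. Then the discrete momentum map of the time-evolution Lagrangian is conserved: 𝖩_{L_d}(𝛗^L, 𝛗^{L+1}) = 𝖩_{L_d}(𝛗^K, 𝛗^{K+1}) for all 0 ≤ K < L ≤ N-1, where 𝖩_{L_d} := 𝖩⁺_{L_d} = 𝖩⁻_{L_d}. -/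
noncomputable section

variable {V : Type*} [NormedAddCommGroup V] [NormedSpace ℝ V] {𝔤 : Type*}

/-- Decomposition of the full differential into the three partial differentials. -/
lemma fderiv_triple_apply (L : V × V × V → ℝ) (hL : ContDiff ℝ (⊤ : ℕ∞) L)
    (p1 p2 p3 : V) (v1 v2 v3 : V) :
    fderiv ℝ L (p1, p2, p3) (v1, v2, v3)
      = T1 L (p1, p2, p3) v1 + T2 L (p1, p2, p3) v2 + T3 L (p1, p2, p3) v3 := by
  have hd : HasFDerivAt L (fderiv ℝ L (p1, p2, p3)) (p1, p2, p3) :=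
    ((hL.differentiable (by simp)) (p1, p2, p3)).hasFDerivAt
  have h1 : HasFDerivAt (fun x : V => L (x, p2, p3))
      ((fderiv ℝ L (p1, p2, p3)).comp (ContinuousLinearMap.inl ℝ V (V × V))) p1 :=
    hd.comp p1 (hasFDerivAt_prodMk_left p1 (p2, p3))
  have h2 : HasFDerivAt (fun x : V => L (p1, x, p3))
      ((fderiv ℝ L (p1, p2, p3)).comp
        ((ContinuousLinearMap.inr ℝ V (V × V)).comp (ContinuousLinearMap.inl ℝ V V))) p2 := by
    have inner : HasFDerivAt (fun x : V => ((p1, x, p3) : V × V × V))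
        ((ContinuousLinearMap.inr ℝ V (V × V)).comp (ContinuousLinearMap.inl ℝ V V)) p2 :=
      (hasFDerivAt_prodMk_right p1 (p2, p3)).comp p2 (hasFDerivAt_prodMk_left p2 p3)
    exact hd.comp p2 inner
  have h3 : HasFDerivAt (fun x : V => L (p1, p2, x))
      ((fderiv ℝ L (p1, p2, p3)).comp
        ((ContinuousLinearMap.inr ℝ V (V × V)).comp (ContinuousLinearMap.inr ℝ V V))) p3 := by
    have inner : HasFDerivAt (fun x : V => ((p1, p2, x) : V × V × V))
        ((ContinuousLinearMap.inr ℝ V (V × V)).comp (ContinuousLinearMap.inr ℝ V V)) p3 :=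
      (hasFDerivAt_prodMk_right p1 (p2, p3)).comp p3 (hasFDerivAt_prodMk_right p2 p3)
    exact hd.comp p3 inner
  have e1 : T1 L (p1, p2, p3) v1 = fderiv ℝ L (p1, p2, p3) (v1, 0, 0) := by
    show fderiv ℝ (fun x : V => L (x, p2, p3)) p1 v1 = _
    rw [h1.fderiv]; rfl
  have e2 : T2 L (p1, p2, p3) v2 = fderiv ℝ L (p1, p2, p3) (0, v2, 0) := by
    show fderiv ℝ (fun x : V => L (p1, x, p3)) p2 v2 = _
    rw [h2.fderiv]; rfl
  have e3 : T3 L (p1, p2, p3) v3 = fderiv ℝ L (p1, p2, p3) (0, 0, v3) := by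
    show fderiv ℝ (fun x : V => L (p1, p2, x)) p3 v3 = _
    rw [h3.fderiv]; rfl
  have hv : ((v1, v2, v3) : V × V × V) = (v1, 0, 0) + (0, v2, 0) + (0, 0, v3) := by
    simp [Prod.ext_iff]
  rw [hv, map_add, map_add, e1, e2, e3]

/-- Infinitesimal invariance of a `G`-invariant density. -/
lemma inf_inv (L : V × V × V → ℝ) (hL : ContDiff ℝ (⊤ : ℕ∞) L)
    (Φ : ℝ → 𝔤 → V → V) (ξM : 𝔤 → V → V)
    (hΦ0 : ∀ (ξ : 𝔤) (q : V), Φ 0 ξ q = q)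
    (hgen : ∀ (ξ : 𝔤) (q : V), HasDerivAt (fun t => Φ t ξ q) (ξM ξ q) 0)
    (hinv : ∀ (t : ℝ) (ξ : 𝔤) (p1 p2 p3 : V),
      L (Φ t ξ p1, Φ t ξ p2, Φ t ξ p3) = L (p1, p2, p3))
    (ξ : 𝔤) (p1 p2 p3 : V) :
    T1 L (p1, p2, p3) (ξM ξ p1) + T2 L (p1, p2, p3) (ξM ξ p2)
      + T3 L (p1, p2, p3) (ξM ξ p3) = 0 := by
  have hc : HasDerivAt (fun t => ((Φ t ξ p1, Φ t ξ p2, Φ t ξ p3) : V × V × V))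
      (ξM ξ p1, ξM ξ p2, ξM ξ p3) 0 :=
    (hgen ξ p1).prodMk ((hgen ξ p2).prodMk (hgen ξ p3))
  have hd : HasFDerivAt L (fderiv ℝ L (p1, p2, p3))
      ((fun t => ((Φ t ξ p1, Φ t ξ p2, Φ t ξ p3) : V × V × V)) 0) := by
    have h0 : ((Φ 0 ξ p1, Φ 0 ξ p2, Φ 0 ξ p3) : V × V × V) = (p1, p2, p3) := by
      simp [hΦ0]
    show HasFDerivAt L _ ((Φ 0 ξ p1, Φ 0 ξ p2, Φ 0 ξ p3) : V × V × V)
    rw [h0]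
    exact ((hL.differentiable (by simp)) (p1, p2, p3)).hasFDerivAt
  have hcomp : HasDerivAt (fun t => L (Φ t ξ p1, Φ t ξ p2, Φ t ξ p3))
      (fderiv ℝ L (p1, p2, p3) (ξM ξ p1, ξM ξ p2, ξM ξ p3)) 0 :=
    hd.comp_hasDerivAt 0 hc
  have hconst : HasDerivAt (fun t : ℝ => L (Φ t ξ p1, Φ t ξ p2, Φ t ξ p3)) 0 0 := by
    have hfun : (fun t : ℝ => L (Φ t ξ p1, Φ t ξ p2, Φ t ξ p3))
        = fun _ : ℝ => L (p1, p2, p3) := funext fun t => hinv t ξ p1 p2 p3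
    rw [hfun]
    exact hasDerivAt_const 0 _
  have hz : fderiv ℝ L (p1, p2, p3) (ξM ξ p1, ξM ξ p2, ξM ξ p3) = 0 :=
    hcomp.unique hconst
  rw [← fderiv_triple_apply L hL p1 p2 p3, hz]

/-- The partial differential of the time-evolution Lagrangian in its second slot. -/
lemma pD2_sum_apply (A : ℕ) (Lag : ℕ → V × V × V → ℝ)
    (hLag : ∀ a, ContDiff ℝ (⊤ : ℕ∞) (Lag a)) (P1 P2 v : Fin (A + 1) → V) :
    pD2 (fun p : (Fin (A + 1) → V) × (Fin (A + 1) → V) =>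
        ∑ a : Fin A, Lag a.1 (p.1 a.castSucc, p.2 a.castSucc, p.1 a.succ)) (P1, P2) v
      = ∑ a : Fin A, T2 (Lag a.1) (P1 a.castSucc, P2 a.castSucc, P1 a.succ) (v a.castSucc) := by
  have hterm : ∀ a : Fin A,
      HasFDerivAt (fun y : Fin (A + 1) → V =>
          Lag a.1 (P1 a.castSucc, y a.castSucc, P1 a.succ))
        ((T2 (Lag a.1) (P1 a.castSucc, P2 a.castSucc, P1 a.succ)).comp
          (ContinuousLinearMap.proj a.castSucc)) P2 := by
    intro a
    have hmid : Differentiable ℝ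
        (fun x : V => ((P1 a.castSucc, x, P1 a.succ) : V × V × V)) :=
      (differentiable_const _).prodMk (differentiable_id.prodMk (differentiable_const _))
    have hdiff : DifferentiableAt ℝ
        (fun x : V => Lag a.1 (P1 a.castSucc, x, P1 a.succ)) (P2 a.castSucc) :=
      (((hLag a.1).differentiable (by simp)).comp hmid) _
    have has2 : HasFDerivAt (fun x : V => Lag a.1 (P1 a.castSucc, x, P1 a.succ))
        (T2 (Lag a.1) (P1 a.castSucc, P2 a.castSucc, P1 a.succ)) (P2 a.castSucc) :=
      hdiff.hasFDerivAt
    exact has2.comp P2 (ContinuousLinearMap.proj (R := ℝ)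
      (φ := fun _ : Fin (A + 1) => V) a.castSucc).hasFDerivAt
  have hsum : HasFDerivAt (fun y : Fin (A + 1) → V =>
      ∑ a : Fin A, Lag a.1 (P1 a.castSucc, y a.castSucc, P1 a.succ))
      (∑ a : Fin A, (T2 (Lag a.1) (P1 a.castSucc, P2 a.castSucc, P1 a.succ)).comp
        (ContinuousLinearMap.proj a.castSucc)) P2 :=
    HasFDerivAt.fun_sum fun a _ => hterm a
  show fderiv ℝ (fun y : Fin (A + 1) → V =>
      ∑ a : Fin A, Lag a.1 (P1 a.castSucc, y a.castSucc, P1 a.succ)) P2 v = _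
  rw [hsum.fderiv]
  simp [ContinuousLinearMap.sum_apply]

/-- If the `G`-invariant density `𝓛_d` satisfies the discrete covariant
Euler-Lagrange equations together with the discrete zero-traction boundary
conditions, then the discrete momentum map `𝖩_{L_d}` of the time-evolution
Lagrangian is conserved: `𝖩_{L_d}(𝛗^L,𝛗^{L+1}) = 𝖩_{L_d}(𝛗^K,𝛗^{K+1})`. -/
theorem time_evolution_momentum_conserved
    (N A : ℕ) (hA : 1 ≤ A)
    (Lag : ℕ → ℕ → V × V × V → ℝ) (hLag : ∀ j a, ContDiff ℝ (⊤ : ℕ∞) (Lag j a))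
    (Φ : ℝ → 𝔤 → V → V) (ξM : 𝔤 → V → V)
    (hΦ0 : ∀ (ξ : 𝔤) (q : V), Φ 0 ξ q = q)
    (hgen : ∀ (ξ : 𝔤) (q : V), HasDerivAt (fun t => Φ t ξ q) (ξM ξ q) 0)
    (hinv : ∀ (j a : ℕ) (t : ℝ) (ξ : 𝔤) (p1 p2 p3 : V),
      Lag j a (Φ t ξ p1, Φ t ξ p2, Φ t ξ p3) = Lag j a (p1, p2, p3))
    (φ : ℕ → ℕ → V) :
    let tri : ℕ → ℕ → V × V × V := fun j a => (φ j a, φ (j + 1) a, φ j (a + 1))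
    let Ld : ℕ → ((Fin (A + 1) → V) × (Fin (A + 1) → V)) → ℝ := fun j p =>
      ∑ a : Fin A, Lag j a.1 (p.1 a.castSucc, p.2 a.castSucc, p.1 a.succ)
    let Φv : ℕ → Fin (A + 1) → V := fun j a => φ j a.1
    -- `⟨𝖩_{L_d}(𝛗^j,𝛗^{j+1}), ξ⟩` (with `𝖩_{L_d} = 𝖩⁺_{L_d} = 𝖩⁻_{L_d}`)
    let Jmom : ℕ → 𝔤 → ℝ := fun j ξ =>
      (pD2 (Ld j) (Φv j, Φv (j + 1))) (fun a => ξM ξ (Φv (j + 1) a))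
    -- discrete covariant Euler-Lagrange equations
    (∀ j a, 1 ≤ j → j ≤ N - 1 → 1 ≤ a → a ≤ A - 1 →
      T1 (Lag j a) (tri j a) + T2 (Lag (j - 1) a) (tri (j - 1) a) +
        T3 (Lag j (a - 1)) (tri j (a - 1)) = 0) →
    -- discrete zero-traction boundary conditions
    (∀ j, 1 ≤ j → j ≤ N - 1 →
      T1 (Lag j 0) (tri j 0) + T2 (Lag (j - 1) 0) (tri (j - 1) 0) = 0) →
    (∀ j, 1 ≤ j → j ≤ N - 1 → T3 (Lag j (A - 1)) (tri j (A - 1)) = 0) →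
    ∀ (K L : ℕ), K < L → L ≤ N - 1 → ∀ ξ : 𝔤, Jmom L ξ = Jmom K ξ := by
  obtain ⟨A', rfl⟩ : ∃ A', A = A' + 1 := ⟨A - 1, (Nat.succ_pred_eq_of_pos hA).symm⟩
  intro tri Ld Φv Jmom hDCEL hT0 hT3bc K L hKL hLN ξ
  -- the momentum map as an explicit sum
  have hJ : ∀ j, Jmom j ξ = ∑ a ∈ Finset.range (A' + 1),
      T2 (Lag j a) (tri j a) (ξM ξ (φ (j + 1) a)) := by
    intro j
    show pD2 (Ld j) (Φv j, Φv (j + 1)) (fun a => ξM ξ (Φv (j + 1) a)) = _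
    rw [show Ld j = (fun p : (Fin (A' + 1 + 1) → V) × (Fin (A' + 1 + 1) → V) =>
      ∑ a : Fin (A' + 1), Lag j a.1 (p.1 a.castSucc, p.2 a.castSucc, p.1 a.succ)) from rfl]
    rw [pD2_sum_apply (A' + 1) (Lag j) (fun a => hLag j a)]
    rw [← Fin.sum_univ_eq_sum_range
      (fun a => T2 (Lag j a) (tri j a) (ξM ξ (φ (j + 1) a))) (A' + 1)]
    rfl
  -- one-step conservation
  have step : ∀ j, j + 1 ≤ N - 1 → Jmom (j + 1) ξ = Jmom j ξ := by
    intro j hj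
    have hj1 : 1 ≤ j + 1 := Nat.le_add_left 1 j
    -- abbreviations
    have hinv3 : ∀ a : ℕ,
        T1 (Lag (j + 1) a) (tri (j + 1) a) (ξM ξ (φ (j + 1) a))
          + T2 (Lag (j + 1) a) (tri (j + 1) a) (ξM ξ (φ (j + 2) a))
          + T3 (Lag (j + 1) a) (tri (j + 1) a) (ξM ξ (φ (j + 1) (a + 1))) = 0 := by
      intro a
      exact inf_inv (Lag (j + 1) a) (hLag _ _) Φ ξM hΦ0 hgen
        (fun t ξ' p1 p2 p3 => hinv _ _ t ξ' p1 p2 p3) ξ _ _ _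
    set g1 : ℕ → ℝ := fun a =>
      (T1 (Lag (j + 1) a) (tri (j + 1) a) + T2 (Lag j a) (tri j a))
        (ξM ξ (φ (j + 1) a)) with hg1
    set term3 : ℕ → ℝ := fun b =>
      T3 (Lag (j + 1) (b - 1)) (tri (j + 1) (b - 1)) (ξM ξ (φ (j + 1) b)) with ht3
    have hterm3A : term3 (A' + 1) = 0 := by
      have h := hT3bc (j + 1) hj1 hj
      simp only [Nat.add_sub_cancel] at h
      simp [ht3, Nat.add_sub_cancel, h]
    have hg10 : g1 0 = 0 := by
      have h := hT0 (j + 1) hj1 hj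
      simp only [Nat.add_sub_cancel] at h
      have h' := congrArg (fun T : V →L[ℝ] ℝ => T (ξM ξ (φ (j + 1) 0))) h
      simpa [hg1, ContinuousLinearMap.add_apply] using h'
    have hmidz : ∀ i, i < A' → g1 (i + 1) + term3 (i + 1) = 0 := by
      intro i hi
      have h := hDCEL (j + 1) (i + 1) hj1 hj (Nat.le_add_left 1 i)
        (by simpa using Nat.succ_le_of_lt hi)
      simp only [Nat.add_sub_cancel] at h
      have h' := congrArg (fun T : V →L[ℝ] ℝ => T (ξM ξ (φ (j + 1) (i + 1)))) h
      simpa [hg1, ht3, ContinuousLinearMap.add_apply] using h'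
    have e0 : ∑ a ∈ Finset.range (A' + 1), (g1 a + term3 (a + 1)) = 0 := by
      have s1 : ∑ a ∈ Finset.range (A' + 1), term3 (a + 1)
          = ∑ a ∈ Finset.range (A' + 1), term3 a + term3 (A' + 1) - term3 0 := by
        have h' := Finset.sum_range_succ' term3 (A' + 1)
        have h'' := Finset.sum_range_succ term3 (A' + 1)
        linarith
      have s3 : ∑ a ∈ Finset.range (A' + 1), (g1 a + term3 a) = term3 0 := by
        rw [Finset.sum_range_succ' (fun a => g1 a + term3 a) A']
        rw [Finset.sum_congr rfl (fun i hi => hmidz i (Finset.mem_range.mp hi))]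
        rw [Finset.sum_const_zero, hg10, zero_add, zero_add]
      rw [Finset.sum_add_distrib, s1, hterm3A]
      have s4 : ∑ a ∈ Finset.range (A' + 1), g1 a
          + ∑ a ∈ Finset.range (A' + 1), term3 a
          = ∑ a ∈ Finset.range (A' + 1), (g1 a + term3 a) :=
        Finset.sum_add_distrib.symm
      linarith [s3, s4]
    -- rewrite `Jmom (j+1)` using infinitesimal invariance
    have e1 : Jmom (j + 1) ξ = ∑ a ∈ Finset.range (A' + 1),
        (-(T1 (Lag (j + 1) a) (tri (j + 1) a) (ξM ξ (φ (j + 1) a))) - term3 (a + 1)) := by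
      rw [hJ (j + 1)]
      refine Finset.sum_congr rfl fun a _ => ?_
      have h := hinv3 a
      have ht : term3 (a + 1)
          = T3 (Lag (j + 1) a) (tri (j + 1) a) (ξM ξ (φ (j + 1) (a + 1))) := by
        simp [ht3, Nat.add_sub_cancel]
      rw [ht]
      have : φ (j + 1 + 1) a = φ (j + 2) a := rfl
      rw [this]
      linarith
    have e2 : ∀ a, (-(T1 (Lag (j + 1) a) (tri (j + 1) a) (ξM ξ (φ (j + 1) a)))
          - term3 (a + 1)) - T2 (Lag j a) (tri j a) (ξM ξ (φ (j + 1) a))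
        = -(g1 a + term3 (a + 1)) := by
      intro a
      simp only [hg1, ContinuousLinearMap.add_apply]
      ring
    have : Jmom (j + 1) ξ - Jmom j ξ = 0 := by
      rw [e1, hJ j, ← Finset.sum_sub_distrib]
      rw [Finset.sum_congr rfl (fun a _ => e2 a)]
      rw [Finset.sum_neg_distrib, e0, neg_zero]
    linarith
  -- induction from `K` to `L`
  revert hKL hLN
  induction L with
  | zero => intro h _; exact absurd h (Nat.not_lt_zero K)
  | succ n ih =>
    intro h hle
    rcases Nat.lt_or_ge K n with h' | h'
    · rw [step n hle]
      exact ih h' (le_trans (Nat.le_succ n) hle)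
    · have hKn : K = n := by omega
      subst hKn
      exact step K hle
end
end

section
/- Suppose the G-invariant discrete Lagrangian density 𝓛_d has a discrete field φ_d satisfying the DCEL equations together with the zero-traction boundary conditions D₁𝓛_0^j + D₂𝓛_0^{j-1} = 0 and D₃𝓛_{A-1}^j = 0 (j = 1,...,N-1). Then the failure of conservation of the space-evolution discrete momentum map is exactly given by boundary terms in time: 𝖩⁺_{N_d}(𝛗_C, 𝛗_{C+1}) - 𝖩⁻_{N_d}(𝛗_B, 𝛗_{B+1}) = -Σ_{a=B+1}^{C} ( J¹(j¹φ_d(Δ_a^0)) + J²(j¹φ_d(Δ_a^{N-1})) + J³(j¹φ_d(Δ_{a-1}^0)) ) for all 0 ≤ B < C ≤ A-1. -/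
noncomputable section

variable {V : Type*} [NormedAddCommGroup V] [NormedSpace ℝ V] {𝔤 : Type*}

lemma hasFDerivAt_T1' (L : V × V × V → ℝ) (hL : Differentiable ℝ L) (p : V × V × V) :
    HasFDerivAt (fun x => L (x, p.2.1, p.2.2))
      ((fderiv ℝ L p).comp ((ContinuousLinearMap.id ℝ V).prod 0)) p.1 := by
  have h : HasFDerivAt (fun x : V => (x, (p.2.1, p.2.2)))
      ((ContinuousLinearMap.id ℝ V).prod 0) p.1 :=
    HasFDerivAt.prodMk (hasFDerivAt_id p.1) (hasFDerivAt_const _ _)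
  exact ((hL p).hasFDerivAt).comp p.1 h

lemma hasFDerivAt_T2' (L : V × V × V → ℝ) (hL : Differentiable ℝ L) (p : V × V × V) :
    HasFDerivAt (fun x => L (p.1, x, p.2.2))
      ((fderiv ℝ L p).comp ((0 : V →L[ℝ] V).prod ((ContinuousLinearMap.id ℝ V).prod 0))) p.2.1 := by
  have h : HasFDerivAt (fun x : V => (p.1, (x, p.2.2)))
      ((0 : V →L[ℝ] V).prod ((ContinuousLinearMap.id ℝ V).prod 0)) p.2.1 :=
    HasFDerivAt.prodMk (hasFDerivAt_const _ _) (HasFDerivAt.prodMk (hasFDerivAt_id _) (hasFDerivAt_const _ _))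
  exact ((hL p).hasFDerivAt).comp p.2.1 h

lemma hasFDerivAt_T3' (L : V × V × V → ℝ) (hL : Differentiable ℝ L) (p : V × V × V) :
    HasFDerivAt (fun x => L (p.1, p.2.1, x))
      ((fderiv ℝ L p).comp
        ((0 : V →L[ℝ] V).prod ((0 : V →L[ℝ] V).prod (ContinuousLinearMap.id ℝ V)))) p.2.2 := by
  have h : HasFDerivAt (fun x : V => (p.1, (p.2.1, x)))
      ((0 : V →L[ℝ] V).prod ((0 : V →L[ℝ] V).prod (ContinuousLinearMap.id ℝ V))) p.2.2 :=
    HasFDerivAt.prodMk (hasFDerivAt_const _ _) (HasFDerivAt.prodMk (hasFDerivAt_const _ _) (hasFDerivAt_id _))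
  exact ((hL p).hasFDerivAt).comp p.2.2 h

lemma fderiv_triple (L : V × V × V → ℝ) (hL : Differentiable ℝ L) (p v : V × V × V) :
    fderiv ℝ L p v = T1 L p v.1 + T2 L p v.2.1 + T3 L p v.2.2 := by
  have h1 : T1 L p v.1 = fderiv ℝ L p (v.1, 0, 0) := by
    rw [T1, (hasFDerivAt_T1' L hL p).fderiv]; rfl
  have h2 : T2 L p v.2.1 = fderiv ℝ L p (0, v.2.1, 0) := by
    rw [T2, (hasFDerivAt_T2' L hL p).fderiv]; rfl
  have h3 : T3 L p v.2.2 = fderiv ℝ L p (0, 0, v.2.2) := by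
    rw [T3, (hasFDerivAt_T3' L hL p).fderiv]; rfl
  rw [h1, h2, h3, ← map_add, ← map_add]
  congr 1
  simp [Prod.ext_iff]

lemma noether_T (L : V × V × V → ℝ) (hL : Differentiable ℝ L)
    (Φ : ℝ → 𝔤 → V → V) (ξM : 𝔤 → V → V)
    (hΦ0 : ∀ (ξ : 𝔤) (q : V), Φ 0 ξ q = q)
    (hgen : ∀ (ξ : 𝔤) (q : V), HasDerivAt (fun t => Φ t ξ q) (ξM ξ q) 0)
    (hinv : ∀ (t : ℝ) (ξ : 𝔤) (p1 p2 p3 : V),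
      L (Φ t ξ p1, Φ t ξ p2, Φ t ξ p3) = L (p1, p2, p3))
    (ξ : 𝔤) (p1 p2 p3 : V) :
    T1 L (p1, p2, p3) (ξM ξ p1) + T2 L (p1, p2, p3) (ξM ξ p2)
      + T3 L (p1, p2, p3) (ξM ξ p3) = 0 := by
  have hc : HasDerivAt (fun t : ℝ => (Φ t ξ p1, Φ t ξ p2, Φ t ξ p3))
      (ξM ξ p1, ξM ξ p2, ξM ξ p3) 0 :=
    HasDerivAt.prodMk (hgen ξ p1) (HasDerivAt.prodMk (hgen ξ p2) (hgen ξ p3))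
  have h0 : (Φ 0 ξ p1, Φ 0 ξ p2, Φ 0 ξ p3) = (p1, p2, p3) := by
    rw [hΦ0, hΦ0, hΦ0]
  have hcomp : HasDerivAt (fun t : ℝ => L (Φ t ξ p1, Φ t ξ p2, Φ t ξ p3))
      (fderiv ℝ L (p1, p2, p3) (ξM ξ p1, ξM ξ p2, ξM ξ p3)) 0 := by
    have := ((hL _).hasFDerivAt).comp_hasDerivAt 0 hc
    rwa [h0] at this
  have hconst : HasDerivAt (fun t : ℝ => L (Φ t ξ p1, Φ t ξ p2, Φ t ξ p3)) 0 0 := by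
    have : (fun t : ℝ => L (Φ t ξ p1, Φ t ξ p2, Φ t ξ p3)) = fun _ => L (p1, p2, p3) := by
      funext t; exact hinv t ξ p1 p2 p3
    rw [this]; exact hasDerivAt_const _ _
  have h := hcomp.unique hconst
  rw [fderiv_triple L hL] at h
  exact h

lemma pD2_sum (N : ℕ) (L : ℕ → V × V × V → ℝ) (hL : ∀ j, Differentiable ℝ (L j))
    (x0 y0 w : Fin (N + 1) → V) :
    pD2 (fun p : (Fin (N + 1) → V) × (Fin (N + 1) → V) =>
        ∑ j : Fin N, L j.1 (p.1 j.castSucc, p.1 j.succ, p.2 j.castSucc)) (x0, y0) w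
      = ∑ j : Fin N, T3 (L j.1) (x0 j.castSucc, x0 j.succ, y0 j.castSucc) (w j.castSucc) := by
  have H : HasFDerivAt
      (fun y : Fin (N + 1) → V => ∑ j : Fin N, L j.1 (x0 j.castSucc, x0 j.succ, y j.castSucc))
      (∑ j : Fin N, (T3 (L j.1) (x0 j.castSucc, x0 j.succ, y0 j.castSucc)).comp
        (ContinuousLinearMap.proj j.castSucc)) y0 := by
    apply HasFDerivAt.fun_sum
    intro j _
    have hd : DifferentiableAt ℝ (fun z : V => L j.1 (x0 j.castSucc, x0 j.succ, z))
        (y0 j.castSucc) :=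
      ((hL j.1).comp ((differentiable_const _).prodMk
        ((differentiable_const _).prodMk differentiable_id))).differentiableAt
    have houter : HasFDerivAt (fun z : V => L j.1 (x0 j.castSucc, x0 j.succ, z))
        (T3 (L j.1) (x0 j.castSucc, x0 j.succ, y0 j.castSucc)) (y0 j.castSucc) :=
      hd.hasFDerivAt
    exact houter.comp y0
      ((ContinuousLinearMap.proj (R := ℝ) (φ := fun _ : Fin (N+1) => V) j.castSucc).hasFDerivAt)
  show (fderiv ℝ
      (fun y : Fin (N + 1) → V => ∑ j : Fin N, L j.1 (x0 j.castSucc, x0 j.succ, y j.castSucc))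
      y0) w = _
  rw [H.fderiv]
  simp [ContinuousLinearMap.sum_apply]

lemma pD1_sum (N : ℕ) (L : ℕ → V × V × V → ℝ) (hL : ∀ j, Differentiable ℝ (L j))
    (x0 y0 w : Fin (N + 1) → V) :
    pD1 (fun p : (Fin (N + 1) → V) × (Fin (N + 1) → V) =>
        ∑ j : Fin N, L j.1 (p.1 j.castSucc, p.1 j.succ, p.2 j.castSucc)) (x0, y0) w
      = ∑ j : Fin N, (T1 (L j.1) (x0 j.castSucc, x0 j.succ, y0 j.castSucc) (w j.castSucc)
          + T2 (L j.1) (x0 j.castSucc, x0 j.succ, y0 j.castSucc) (w j.succ)) := by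
  have H : HasFDerivAt
      (fun x : Fin (N + 1) → V => ∑ j : Fin N, L j.1 (x j.castSucc, x j.succ, y0 j.castSucc))
      (∑ j : Fin N, (fderiv ℝ (L j.1) (x0 j.castSucc, x0 j.succ, y0 j.castSucc)).comp
        ((ContinuousLinearMap.proj j.castSucc).prod
          ((ContinuousLinearMap.proj j.succ).prod 0))) x0 := by
    apply HasFDerivAt.fun_sum
    intro j _
    have h1 : HasFDerivAt (fun x : Fin (N + 1) → V => x j.castSucc)
        (ContinuousLinearMap.proj (R := ℝ) (φ := fun _ : Fin (N+1) => V) j.castSucc) x0 :=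
      (ContinuousLinearMap.proj (R := ℝ) (φ := fun _ : Fin (N+1) => V) j.castSucc).hasFDerivAt
    have h2 : HasFDerivAt (fun x : Fin (N + 1) → V => x j.succ)
        (ContinuousLinearMap.proj (R := ℝ) (φ := fun _ : Fin (N+1) => V) j.succ) x0 :=
      (ContinuousLinearMap.proj (R := ℝ) (φ := fun _ : Fin (N+1) => V) j.succ).hasFDerivAt
    have h3 : HasFDerivAt (fun _ : Fin (N + 1) → V => y0 j.castSucc)
        (0 : (Fin (N + 1) → V) →L[ℝ] V) x0 := hasFDerivAt_const _ _
    have hin := HasFDerivAt.prodMk h1 (HasFDerivAt.prodMk h2 h3)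
    exact ((hL j.1) _).hasFDerivAt.comp x0 hin
  show (fderiv ℝ
      (fun x : Fin (N + 1) → V => ∑ j : Fin N, L j.1 (x j.castSucc, x j.succ, y0 j.castSucc))
      x0) w = _
  rw [H.fderiv]
  rw [ContinuousLinearMap.sum_apply]
  refine Finset.sum_congr rfl fun j _ => ?_
  rw [ContinuousLinearMap.comp_apply, fderiv_triple _ (hL j.1)]
  simp

/-- Under zero-traction boundary conditions, the failure of conservation of the
space-evolution discrete momentum map is exactly given by boundary terms in
time:
`𝖩⁺_{N_d}(𝛗_C,𝛗_{C+1}) - 𝖩⁻_{N_d}(𝛗_B,𝛗_{B+1})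
  = -Σ_{a=B+1}^C (J¹(Δ_a^0) + J²(Δ_a^{N-1}) + J³(Δ_{a-1}^0))`. -/
theorem space_momentum_defect
    (N A : ℕ) (hN : 1 ≤ N)
    (Lag : ℕ → ℕ → V × V × V → ℝ) (hLag : ∀ j a, ContDiff ℝ (⊤ : ℕ∞) (Lag j a))
    (Φ : ℝ → 𝔤 → V → V) (ξM : 𝔤 → V → V)
    (hΦ0 : ∀ (ξ : 𝔤) (q : V), Φ 0 ξ q = q)
    (hgen : ∀ (ξ : 𝔤) (q : V), HasDerivAt (fun t => Φ t ξ q) (ξM ξ q) 0)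
    (hinv : ∀ (j a : ℕ) (t : ℝ) (ξ : 𝔤) (p1 p2 p3 : V),
      Lag j a (Φ t ξ p1, Φ t ξ p2, Φ t ξ p3) = Lag j a (p1, p2, p3))
    (φ : ℕ → ℕ → V) :
    let tri : ℕ → ℕ → V × V × V := fun j a => (φ j a, φ (j + 1) a, φ j (a + 1))
    let J1 : ℕ → ℕ → 𝔤 → ℝ := fun j a ξ => (T1 (Lag j a) (tri j a)) (ξM ξ (φ j a))
    let J2 : ℕ → ℕ → 𝔤 → ℝ := fun j a ξ => (T2 (Lag j a) (tri j a)) (ξM ξ (φ (j + 1) a))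
    let J3 : ℕ → ℕ → 𝔤 → ℝ := fun j a ξ => (T3 (Lag j a) (tri j a)) (ξM ξ (φ j (a + 1)))
    let Nd : ℕ → ((Fin (N + 1) → V) × (Fin (N + 1) → V)) → ℝ := fun a p =>
      ∑ j : Fin N, Lag j.1 a (p.1 j.castSucc, p.1 j.succ, p.2 j.castSucc)
    let Ψ : ℕ → Fin (N + 1) → V := fun a j => φ j.1 a
    -- `⟨𝖩⁺_{N_d}(𝛗_a,𝛗_{a+1}),ξ⟩` and `⟨𝖩⁻_{N_d}(𝛗_a,𝛗_{a+1}),ξ⟩`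
    let Jplus : ℕ → 𝔤 → ℝ := fun a ξ =>
      (pD2 (Nd a) (Ψ a, Ψ (a + 1))) (fun j => ξM ξ (Ψ (a + 1) j))
    let Jminus : ℕ → 𝔤 → ℝ := fun a ξ =>
      (-(pD1 (Nd a) (Ψ a, Ψ (a + 1)))) (fun j => ξM ξ (Ψ a j))
    -- discrete covariant Euler-Lagrange equations
    (∀ j a, 1 ≤ j → j ≤ N - 1 → 1 ≤ a → a ≤ A - 1 →
      T1 (Lag j a) (tri j a) + T2 (Lag (j - 1) a) (tri (j - 1) a) +
        T3 (Lag j (a - 1)) (tri j (a - 1)) = 0) →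
    -- discrete zero-traction boundary conditions
    (∀ j, 1 ≤ j → j ≤ N - 1 →
      T1 (Lag j 0) (tri j 0) + T2 (Lag (j - 1) 0) (tri (j - 1) 0) = 0) →
    (∀ j, 1 ≤ j → j ≤ N - 1 → T3 (Lag j (A - 1)) (tri j (A - 1)) = 0) →
    ∀ (B C : ℕ), B < C → C ≤ A - 1 → ∀ ξ : 𝔤,
      Jplus C ξ - Jminus B ξ =
        -(∑ a ∈ Finset.Icc (B + 1) C,
          (J1 0 a ξ + J2 (N - 1) a ξ + J3 0 (a - 1) ξ)) := by
  intro tri J1 J2 J3 Nd Ψ Jplus Jminus hEL hbc0 hbcA B C hBC hCA ξ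
  have hLd : ∀ j a, Differentiable ℝ (Lag j a) := fun j a =>
    (hLag j a).differentiable (by simp)
  -- Noether identity per node
  have hNoe : ∀ j a, J1 j a ξ + J2 j a ξ + J3 j a ξ = 0 := fun j a =>
    noether_T (Lag j a) (hLd j a) Φ ξM hΦ0 hgen
      (fun t ξ' p1 p2 p3 => hinv j a t ξ' p1 p2 p3) ξ (φ j a) (φ (j + 1) a) (φ j (a + 1))
  -- compute Jplus
  have hJp : ∀ a, Jplus a ξ = ∑ j ∈ Finset.range N, J3 j a ξ := by
    intro a
    have h := pD2_sum N (fun j => Lag j a) (fun j => hLd j a) (Ψ a) (Ψ (a + 1))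
      (fun j => ξM ξ (Ψ (a + 1) j))
    have e1 : Jplus a ξ = ∑ j : Fin N,
        T3 (Lag j.1 a) (Ψ a j.castSucc, Ψ a j.succ, Ψ (a + 1) j.castSucc)
          (ξM ξ (Ψ (a + 1) j.castSucc)) := h
    rw [e1, Finset.sum_range]
    refine Finset.sum_congr rfl fun j _ => ?_
    simp only [Ψ, J3, tri, Fin.coe_castSucc, Fin.val_succ]
  -- compute Jminus
  have hJm : ∀ a, Jminus a ξ = -∑ j ∈ Finset.range N, (J1 j a ξ + J2 j a ξ) := by
    intro a
    have h := pD1_sum N (fun j => Lag j a) (fun j => hLd j a) (Ψ a) (Ψ (a + 1))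
      (fun j => ξM ξ (Ψ a j))
    have e1 : Jminus a ξ = -(∑ j : Fin N,
        (T1 (Lag j.1 a) (Ψ a j.castSucc, Ψ a j.succ, Ψ (a + 1) j.castSucc)
          (ξM ξ (Ψ a j.castSucc))
        + T2 (Lag j.1 a) (Ψ a j.castSucc, Ψ a j.succ, Ψ (a + 1) j.castSucc)
          (ξM ξ (Ψ a j.succ)))) := by
      show -(pD1 (Nd a) (Ψ a, Ψ (a + 1)) (fun j => ξM ξ (Ψ a j))) = _
      rw [h]
    rw [e1, Finset.sum_range]
    congr 1
  -- abbreviation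
  set S : ℕ → ℝ := fun a => ∑ j ∈ Finset.range N, (J1 j a ξ + J2 j a ξ) with hSdef
  have hSneg : ∀ a, S a = -∑ j ∈ Finset.range N, J3 j a ξ := by
    intro a
    rw [hSdef, ← Finset.sum_neg_distrib]
    exact Finset.sum_congr rfl fun j _ => by have := hNoe j a; linarith
  -- single-step defect identity
  have hstep : ∀ a, 1 ≤ a → a ≤ A - 1 →
      S (a - 1) - S a = -(J1 0 a ξ + J2 (N - 1) a ξ + J3 0 (a - 1) ξ) := by
    intro a ha1 ha2
    have hEL' : ∀ j ∈ Finset.Ico 1 N,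
        J1 j a ξ + J2 (j - 1) a ξ + J3 j (a - 1) ξ = 0 := by
      intro j hj
      rw [Finset.mem_Ico] at hj
      have h := hEL j a hj.1 (by omega) ha1 ha2
      have happ := congrArg (fun T : V →L[ℝ] ℝ => T (ξM ξ (φ j a))) h
      simp only [ContinuousLinearMap.add_apply, ContinuousLinearMap.zero_apply] at happ
      have e2 : j - 1 + 1 = j := Nat.sub_add_cancel hj.1
      have e3 : a - 1 + 1 = a := Nat.sub_add_cancel ha1
      show T1 (Lag j a) (tri j a) (ξM ξ (φ j a))
        + T2 (Lag (j - 1) a) (tri (j - 1) a) (ξM ξ (φ (j - 1 + 1) a))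
        + T3 (Lag j (a - 1)) (tri j (a - 1)) (ξM ξ (φ j (a - 1 + 1))) = 0
      rw [e2, e3]
      exact happ
    have hsum0 : ∑ j ∈ Finset.Ico 1 N,
        (J1 j a ξ + J2 (j - 1) a ξ + J3 j (a - 1) ξ) = 0 := Finset.sum_eq_zero hEL'
    rw [Finset.sum_add_distrib, Finset.sum_add_distrib] at hsum0
    have hS1 : ∑ j ∈ Finset.range N, J1 j a ξ
        = J1 0 a ξ + ∑ j ∈ Finset.Ico 1 N, J1 j a ξ := by
      rw [Finset.range_eq_Ico, Finset.sum_eq_sum_Ico_succ_bot hN]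
    have hS3 : ∑ j ∈ Finset.range N, J3 j (a - 1) ξ
        = J3 0 (a - 1) ξ + ∑ j ∈ Finset.Ico 1 N, J3 j (a - 1) ξ := by
      rw [Finset.range_eq_Ico, Finset.sum_eq_sum_Ico_succ_bot hN]
    have hshift : ∑ j ∈ Finset.Ico 1 N, J2 (j - 1) a ξ
        = ∑ j ∈ Finset.range (N - 1), J2 j a ξ := by
      rw [Finset.sum_Ico_eq_sum_range]
      refine Finset.sum_congr rfl fun i _ => ?_
      congr 1
      omega
    have hS2 : ∑ j ∈ Finset.range N, J2 j a ξ
        = (∑ j ∈ Finset.range (N - 1), J2 j a ξ) + J2 (N - 1) a ξ := by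
      have hN' : N - 1 + 1 = N := by omega
      calc ∑ j ∈ Finset.range N, J2 j a ξ
          = ∑ j ∈ Finset.range (N - 1 + 1), J2 j a ξ := by rw [hN']
        _ = (∑ j ∈ Finset.range (N - 1), J2 j a ξ) + J2 (N - 1) a ξ :=
          Finset.sum_range_succ _ _
    have hSa : S a = (∑ j ∈ Finset.range N, J1 j a ξ)
        + ∑ j ∈ Finset.range N, J2 j a ξ := Finset.sum_add_distrib
    have hSam : S (a - 1) = -∑ j ∈ Finset.range N, J3 j (a - 1) ξ := hSneg _
    rw [hshift] at hsum0
    rw [hSa, hSam, hS1, hS2, hS3]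
    linarith
  -- telescoping
  have htel : ∑ a ∈ Finset.Icc (B + 1) C, (S (a - 1) - S a) = S B - S C := by
    rw [← Finset.Ico_add_one_right_eq_Icc, Finset.sum_Ico_eq_sum_range]
    have hCB : C + 1 - (B + 1) = C - B := by omega
    rw [hCB]
    have hcong : ∀ i ∈ Finset.range (C - B),
        S (B + 1 + i - 1) - S (B + 1 + i) = S (B + i) - S (B + (i + 1)) := by
      intro i _
      congr 2 <;> omega
    rw [Finset.sum_congr rfl hcong, Finset.sum_range_sub' (fun i => S (B + i))]
    congr 2
    omega
  -- conclude
  have hRHS : ∑ a ∈ Finset.Icc (B + 1) C, (J1 0 a ξ + J2 (N - 1) a ξ + J3 0 (a - 1) ξ)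
      = -(S B - S C) := by
    rw [← htel, ← Finset.sum_neg_distrib]
    refine Finset.sum_congr rfl fun a ha => ?_
    rw [Finset.mem_Icc] at ha
    have := hstep a (by omega) (by omega)
    linarith
  have hJpC : Jplus C ξ = -S C := by rw [hJp, hSneg]; ring
  have hJmB : Jminus B ξ = -S B := by rw [hJm, hSdef]
  rw [hJpC, hJmB, hRHS]
  ring


end
end
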